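/- Let d ≥ 3 and index the standard basis (e_i) of ℂ^d cyclically by i ∈ ℤ/dℤ. Let U be a linear map on the symmetric subspace Sym²(ℂ^d) ⊂ ℂ^d ⊗ ℂ^d satisfying, for all i, j ∈ ℤ/dℤ: U(e_i ⊗ e_i) = (e_i ⊗ e_{i+1} + e_{i+1} ⊗ e_i)/√2, U((e_i ⊗ e_{i+1} + e_{i+1} ⊗ e_i)/√2) = e_i ⊗ e_i, and U(e_i ⊗ e_j + e_j ⊗ e_i) = e_i ⊗ e_j + e_j ⊗ e_i whenever j ∉ {i−1, i, i+1}. Then U is a bosonic universal entangler: for every nonzero v ∈ ℂ^d and every w ∈ ℂ^d, U(v ⊗ v) ≠ w ⊗ w. -/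

import Mathlib

/-- The tensor product `v ⊗ w` of two vectors of `ℂ^n`, realized inside
`ℂ^n ⊗ ℂ^n ≅ ℂ^(n × n)` (with the induced inner product). -/
noncomputable def tp {n : Type*} [Fintype n] (v w : EuclideanSpace ℂ n) :
    EuclideanSpace ℂ (n × n) :=
  WithLp.toLp 2 (fun p : n × n => v p.1 * w p.2)

/-- The symmetric subspace `Sym²(ℂ^n) ⊆ ℂ^n ⊗ ℂ^n`: the vectors fixed by the
swap `v ⊗ w ↦ w ⊗ v`. -/
noncomputable def symSub (n : Type*) [Fintype n] :
    Submodule ℂ (EuclideanSpace ℂ (n × n)) where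
  carrier := {T | ∀ i j : n, T (i, j) = T (j, i)}
  add_mem' := by
    intro T S hT hS i j
    simp only [PiLp.add_apply, hT i j, hS i j]
  zero_mem' := by intro _ _; rfl
  smul_mem' := by
    intro c T hT i j
    simp only [PiLp.smul_apply, hT i j]

/-- The bosonic product state `v ⊗ v` as an element of the symmetric subspace. -/
noncomputable def tpSym {n : Type*} [Fintype n] (v : EuclideanSpace ℂ n) :
    symSub n :=
  ⟨tp v v, fun _ _ => mul_comm _ _⟩

/-- The standard basis vector `e_i` of `ℂ^d`, indexed cyclically by `ZMod d`. -/
noncomputable def e {d : ℕ} [NeZero d] (i : ZMod d) : EuclideanSpace ℂ (ZMod d) :=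
  EuclideanSpace.single i 1

/-- The element `e_i ⊗ e_j + e_j ⊗ e_i` of the symmetric subspace. -/
noncomputable def oSym (d : ℕ) [NeZero d] (i j : ZMod d) : symSub (ZMod d) :=
  ⟨tp (e i) (e j) + tp (e j) (e i), by
    intro p q
    show e i p * e j q + e j p * e i q = e i q * e j p + e j q * e i p
    ring⟩

noncomputable def ev {n : Type*} [Fintype n] (a b : n) : symSub n →ₗ[ℂ] ℂ where
  toFun T := (T : EuclideanSpace ℂ (n × n)) (a, b)
  map_add' _ _ := rfl
  map_smul' _ _ := rfl

lemma symSub_ext {n : Type*} [Fintype n] {x y : symSub n}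
    (h : ∀ a b : n, ev a b x = ev a b y) : x = y :=
  Subtype.ext (PiLp.ext fun p => h p.1 p.2)

section auxlem

variable {d : ℕ} [NeZero d]

lemma ev_tpSym (a b : ZMod d) (v : EuclideanSpace ℂ (ZMod d)) :
    ev a b (tpSym v) = v a * v b := rfl

lemma e_apply (i a : ZMod d) : e i a = if a = i then 1 else 0 :=
  EuclideanSpace.single_apply i 1 a

lemma ev_oSym (a b i j : ZMod d) :
    ev a b (oSym d i j) =
      (if a = i then 1 else 0) * (if b = j then 1 else 0)
      + (if a = j then 1 else 0) * (if b = i then 1 else 0) := by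
  show e i a * e j b + e j a * e i b = _
  rw [e_apply, e_apply, e_apply, e_apply]

lemma ev_tpSym_e (a b i : ZMod d) :
    ev a b (tpSym (e i)) = (if a = i then 1 else 0) * (if b = i then 1 else 0) := by
  show e i a * e i b = _
  rw [e_apply, e_apply]

lemma oSym_comm (i j : ZMod d) : oSym d i j = oSym d j i := by
  refine symSub_ext fun a b => ?_
  rw [ev_oSym, ev_oSym]; ring

lemma oSym_self (i : ZMod d) : oSym d i i = (2 : ℂ) • tpSym (e i) := by
  refine symSub_ext fun a b => ?_
  rw [map_smul, ev_oSym, ev_tpSym_e]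
  simp only [smul_eq_mul]; ring

omit [NeZero d] in
lemma bue_one_ne (hd : 3 ≤ d) : (1 : ZMod d) ≠ 0 := by
  have : ((1 : ℕ) : ZMod d) ≠ 0 := by
    rw [Ne, ZMod.natCast_eq_zero_iff]
    intro h; have := Nat.le_of_dvd one_pos h; omega
  simpa using this

omit [NeZero d] in
lemma bue_two_ne (hd : 3 ≤ d) : (2 : ZMod d) ≠ 0 := by
  have : ((2 : ℕ) : ZMod d) ≠ 0 := by
    rw [Ne, ZMod.natCast_eq_zero_iff]
    intro h; have := Nat.le_of_dvd two_pos h; omega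
  simpa using this

lemma sum3 {M : Type*} [AddCommMonoid M] (hd : 3 ≤ d)
    (i : ZMod d) (f : ZMod d → M)
    (h : ∀ j, j ≠ i → j ≠ i + 1 → j ≠ i - 1 → f j = 0) :
    ∑ j : ZMod d, f j = f i + f (i + 1) + f (i - 1) := by
  have d1 : i ≠ i + 1 := fun hh => bue_one_ne hd (by linear_combination -hh)
  have d2 : i ≠ i - 1 := fun hh => bue_one_ne hd (by linear_combination hh)
  have d3 : i + 1 ≠ i - 1 := fun hh => bue_two_ne hd (by linear_combination hh)
  have hsub : ({i, i + 1, i - 1} : Finset (ZMod d)) ⊆ Finset.univ := Finset.subset_univ _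
  rw [← Finset.sum_subset hsub]
  · rw [Finset.sum_insert (by simp [d1, d2]), Finset.sum_insert (by simp [d3]),
      Finset.sum_singleton, add_assoc]
  · intro x _ hx
    simp only [Finset.mem_insert, Finset.mem_singleton, not_or] at hx
    exact h x hx.1 hx.2.1 hx.2.2

lemma tpSym_decomp (v : EuclideanSpace ℂ (ZMod d)) :
    tpSym v = (2 : ℂ)⁻¹ • ∑ i : ZMod d, ∑ j : ZMod d, (v i * v j) • oSym d i j := by
  refine symSub_ext fun a b => ?_
  rw [map_smul]
  simp_rw [map_sum, map_smul, ev_oSym, ev_tpSym]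
  simp only [smul_eq_mul, mul_add, mul_ite, ite_mul, mul_zero, zero_mul, mul_one, one_mul,
    Finset.sum_add_distrib, Finset.sum_ite_eq, Finset.sum_ite_eq', Finset.mem_univ, if_true]
  rw [Finset.sum_comm]
  simp only [Finset.sum_ite_eq, Finset.mem_univ, if_true]
  ring

end auxlem

/-- The permutation gate of the paper is a bosonic universal entangler: for
`d ≥ 3`, if a linear map `U` on `Sym²(ℂ^d)` swaps `e_i ⊗ e_i` with
`(e_i ⊗ e_{i+1} + e_{i+1} ⊗ e_i)/√2` for every `i ∈ ℤ/dℤ` and fixes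
`e_i ⊗ e_j + e_j ⊗ e_i` for all `j ∉ {i-1, i, i+1}`, then `U` maps no bosonic
product state `v ⊗ v` (with `v ≠ 0`) to a bosonic product state `w ⊗ w`. -/
theorem permutation_gate_is_bosonic_universal_entangler (d : ℕ) [NeZero d]
    (hd : 3 ≤ d) (U : symSub (ZMod d) →ₗ[ℂ] symSub (ZMod d))
    (h1 : ∀ i : ZMod d,
      U (tpSym (e i)) = ((Real.sqrt 2 : ℂ))⁻¹ • oSym d i (i + 1))
    (h2 : ∀ i : ZMod d,
      U (((Real.sqrt 2 : ℂ))⁻¹ • oSym d i (i + 1)) = tpSym (e i))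
    (h3 : ∀ i j : ZMod d, j ≠ i - 1 → j ≠ i → j ≠ i + 1 →
      U (oSym d i j) = oSym d i j) :
    ∀ v : EuclideanSpace ℂ (ZMod d), v ≠ 0 →
      ∀ w : EuclideanSpace ℂ (ZMod d), U (tpSym v) ≠ tpSym w := by
  intro v hv w hw
  set s : ℂ := ((Real.sqrt 2 : ℝ) : ℂ) with hs_def
  have hs2 : s * s = 2 := by
    rw [hs_def]
    norm_cast
    exact Real.mul_self_sqrt (by norm_num)
  have hs0 : s ≠ 0 := by
    rw [hs_def]
    simp only [ne_eq, Complex.ofReal_eq_zero]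
    exact Real.sqrt_ne_zero'.mpr (by norm_num)
  -- distinctness facts
  have hx1 : ∀ x : ZMod d, x ≠ x + 1 := fun x hh => bue_one_ne hd (by linear_combination -hh)
  have hx1' : ∀ x : ZMod d, x + 1 ≠ x := fun x => (hx1 x).symm
  have hxm : ∀ x : ZMod d, x ≠ x - 1 := fun x hh => bue_one_ne hd (by linear_combination hh)
  have hxm' : ∀ x : ZMod d, x - 1 ≠ x := fun x => (hxm x).symm
  have hx2 : ∀ x : ZMod d, x ≠ x + 2 := fun x hh => bue_two_ne hd (by linear_combination -hh)
  have hx2' : ∀ x : ZMod d, x + 2 ≠ x := fun x => (hx2 x).symm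
  have hpm : ∀ x : ZMod d, x + 1 ≠ x - 1 := fun x hh => bue_two_ne hd (by linear_combination hh)
  have hpm' : ∀ x : ZMod d, x - 1 ≠ x + 1 := fun x => (hpm x).symm
  -- the action of U on the oSym basis
  have hUo : ∀ i j : ZMod d, U (oSym d i j) =
      if j = i then s • oSym d i (i + 1)
      else if j = i + 1 then s • tpSym (e i)
      else if j = i - 1 then s • tpSym (e j)
      else oSym d i j := by
    intro i j
    have h2s : (2 : ℂ) * s⁻¹ = s := by
      rw [← hs2, mul_assoc, mul_inv_cancel₀ hs0, mul_one]
    split_ifs with hji hj1 hj2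
    · subst hji
      rw [oSym_self, map_smul, h1 j, smul_smul, h2s]
    · subst hj1
      calc U (oSym d i (i + 1)) = s • (s⁻¹ • U (oSym d i (i + 1))) := by
            rw [smul_smul, mul_inv_cancel₀ hs0, one_smul]
        _ = s • U (s⁻¹ • oSym d i (i + 1)) := by rw [map_smul]
        _ = s • tpSym (e i) := by rw [h2 i]
    · subst hj2
      rw [oSym_comm]
      have hii : oSym d (i - 1) i = oSym d (i - 1) ((i - 1) + 1) := by
        rw [show (i - 1) + 1 = i from by ring]
      rw [hii]
      calc U (oSym d (i - 1) ((i - 1) + 1))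
          = s • (s⁻¹ • U (oSym d (i - 1) ((i - 1) + 1))) := by
            rw [smul_smul, mul_inv_cancel₀ hs0, one_smul]
        _ = s • U (s⁻¹ • oSym d (i - 1) ((i - 1) + 1)) := by rw [map_smul]
        _ = s • tpSym (e (i - 1)) := by rw [h2 (i - 1)]
    · exact h3 i j hj2 hji hj1
  -- decomposition of U (tpSym v)
  have hT : U (tpSym v)
      = (2 : ℂ)⁻¹ • ∑ i : ZMod d, ∑ j : ZMod d, (v i * v j) • U (oSym d i j) := by
    conv_lhs => rw [tpSym_decomp v]
    rw [map_smul, map_sum]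
    simp_rw [map_sum, map_smul]
  -- diagonal coordinates
  have key1 : ∀ a : ZMod d, ev a a (U (tpSym v)) = s * (v a * v (a + 1)) := by
    intro a
    rw [hT, map_smul]
    simp_rw [map_sum, map_smul, hUo, smul_eq_mul]
    have inner : ∀ i : ZMod d,
        (∑ j : ZMod d, (v i * v j) *
          ev a a (if j = i then s • oSym d i (i + 1) else if j = i + 1 then s • tpSym (e i)
            else if j = i - 1 then s • tpSym (e j) else oSym d i j))
        = (if a = i then v i * v (i + 1) * s else 0)
          + (if a = i - 1 then v i * v (i - 1) * s else 0) := by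
      intro i
      have h0 : ∀ j : ZMod d, j ≠ i → j ≠ i + 1 → j ≠ i - 1 →
          (v i * v j) *
            ev a a (if j = i then s • oSym d i (i + 1) else if j = i + 1 then s • tpSym (e i)
              else if j = i - 1 then s • tpSym (e j) else oSym d i j) = 0 := by
        intro j hj hj1 hj2
        rw [if_neg hj, if_neg hj1, if_neg hj2, ev_oSym]
        rcases eq_or_ne a i with rfl | hai
        · have haj : a ≠ j := fun hh => hj hh.symm
          simp [haj]
        · simp [hai]
      rw [sum3 hd i _ h0]
      rw [if_pos rfl, if_neg (hx1' i), if_pos rfl, if_neg (hxm' i), if_neg (hpm' i), if_pos rfl]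
      rw [map_smul, map_smul, map_smul, ev_oSym, ev_tpSym_e, ev_tpSym_e]
      rcases eq_or_ne a i with rfl | hai
      · simp only [if_neg (hx1 a), if_neg (hxm a), eq_self_iff_true, if_true, smul_eq_mul]
        ring
      · rcases eq_or_ne a (i - 1) with rfl | haim
        · simp only [if_neg hai, if_neg (hpm' i), eq_self_iff_true, if_true, smul_eq_mul]
          ring
        · simp only [if_neg hai, if_neg haim, smul_eq_mul]
          ring
    rw [Finset.sum_congr rfl fun i _ => inner i]
    rw [Finset.sum_add_distrib]
    simp_rw [eq_sub_iff_add_eq]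
    rw [Finset.sum_ite_eq, Finset.sum_ite_eq]
    simp only [Finset.mem_univ, if_true, smul_eq_mul]
    rw [show a + 1 - 1 = a from by ring]
    ring
  -- off-diagonal coordinates
  have key2 : ∀ a : ZMod d, ev a (a + 1) (U (tpSym v)) = s⁻¹ * (v a * v a) := by
    intro a
    rw [hT, map_smul]
    simp_rw [map_sum, map_smul, hUo, smul_eq_mul]
    have inner : ∀ i : ZMod d,
        (∑ j : ZMod d, (v i * v j) *
          ev a (a + 1) (if j = i then s • oSym d i (i + 1) else if j = i + 1 then s • tpSym (e i)
            else if j = i - 1 then s • tpSym (e j) else oSym d i j))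
        = (if a = i then v i * v i * s else 0) := by
      intro i
      have h0 : ∀ j : ZMod d, j ≠ i → j ≠ i + 1 → j ≠ i - 1 →
          (v i * v j) *
            ev a (a + 1) (if j = i then s • oSym d i (i + 1) else if j = i + 1 then s • tpSym (e i)
              else if j = i - 1 then s • tpSym (e j) else oSym d i j) = 0 := by
        intro j hj hj1 hj2
        rw [if_neg hj, if_neg hj1, if_neg hj2, ev_oSym]
        rcases eq_or_ne a i with rfl | hai
        · have haj : a ≠ j := fun hh => hj hh.symm
          have haj1 : a + 1 ≠ j := fun hh => hj1 (by linear_combination -hh)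
          simp [haj, haj1]
        · rcases eq_or_ne a j with rfl | haj
          · have hai1 : a + 1 ≠ i := fun hh => hj2 (by linear_combination hh)
            simp [hai, hai1]
          · simp [hai, haj]
      rw [sum3 hd i _ h0]
      rw [if_pos rfl, if_neg (hx1' i), if_pos rfl, if_neg (hxm' i), if_neg (hpm' i), if_pos rfl]
      rw [map_smul, map_smul, map_smul, ev_oSym, ev_tpSym_e, ev_tpSym_e]
      rcases eq_or_ne a i with rfl | hai
      · have e1 : a + 1 ≠ a := hx1' a
        have e2 : a ≠ a + 1 := hx1 a
        have e3 : a ≠ a - 1 := hxm a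
        simp only [if_neg e1, if_neg e2, if_neg e3, if_neg (hpm a), eq_self_iff_true, if_true,
          smul_eq_mul]
        ring
      · rcases eq_or_ne a (i + 1) with rfl | hai1
        · have e1 : i + 1 + 1 ≠ i := fun hh => bue_two_ne (d := d) hd (by linear_combination hh)
          have e2 : i + 1 + 1 ≠ i + 1 := hx1' (i + 1)
          have e3 : i + 1 ≠ i - 1 := hpm i
          simp only [if_neg hai, if_neg e1, if_neg e2, if_neg e3, eq_self_iff_true, if_true,
            smul_eq_mul]
          ring
        · rcases eq_or_ne a (i - 1) with rfl | haim
          · have e1 : i - 1 + 1 ≠ i - 1 := hx1' (i - 1)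
            simp only [if_neg hai, if_neg (hpm' i), if_neg e1, eq_self_iff_true, if_true,
              smul_eq_mul]
            ring
          · simp only [if_neg hai, if_neg hai1, if_neg haim, smul_eq_mul]
            ring
    rw [Finset.sum_congr rfl fun i _ => inner i]
    rw [Finset.sum_ite_eq]
    simp only [Finset.mem_univ, if_true, smul_eq_mul]
    have hinv : (2 : ℂ)⁻¹ * s = s⁻¹ := by
      rw [← hs2, mul_inv, mul_assoc, inv_mul_cancel₀ hs0, mul_one]
    rw [← hinv]
    ring
  -- translate into equations relating v and w
  have E1 : ∀ a : ZMod d, s * (v a * v (a + 1)) = w a * w a := by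
    intro a
    have h := key1 a
    rw [hw, ev_tpSym] at h
    exact h.symm
  have E2 : ∀ a : ZMod d, s⁻¹ * (v a * v a) = w a * w (a + 1) := by
    intro a
    have h := key2 a
    rw [hw, ev_tpSym] at h
    exact h.symm
  -- propagation of nonvanishing
  have step : ∀ a : ZMod d, v a ≠ 0 → v (a + 1) ≠ 0 := by
    intro a ha hva1
    have hwa1 : w (a + 1) ≠ 0 := by
      intro h0
      have h := E2 a
      rw [h0, mul_zero] at h
      rcases mul_eq_zero.mp h with h' | h'
      · exact hs0 (inv_eq_zero.mp h')
      · rcases mul_eq_zero.mp h' with h'' | h'' <;> exact ha h''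
    have h := E1 (a + 1)
    rw [hva1, zero_mul, mul_zero] at h
    exact hwa1 (mul_self_eq_zero.mp h.symm)
  have hall : ∀ a : ZMod d, v a ≠ 0 := by
    obtain ⟨i0, hi0⟩ : ∃ i : ZMod d, v i ≠ 0 := by
      by_contra h
      push_neg at h
      exact hv (PiLp.ext h)
    have hk : ∀ k : ℕ, v (i0 + (k : ZMod d)) ≠ 0 := by
      intro k
      induction k with
      | zero =>
          rw [Nat.cast_zero, add_zero]
          exact hi0
      | succ n ih =>
          rw [Nat.cast_add, Nat.cast_one, ← add_assoc]
          exact step _ ih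
    intro a
    have h := hk (a - i0).val
    rwa [ZMod.natCast_rightInverse (a - i0), show i0 + (a - i0) = a from by ring] at h
  -- the cubic relation
  have cube : ∀ a : ZMod d, v a ^ 3 = 4 * (v (a + 1) ^ 2 * v (a + 2)) := by
    intro a
    have E2' : v a * v a = s * (w a * w (a + 1)) := by
      rw [← E2 a, ← mul_assoc, mul_inv_cancel₀ hs0, one_mul]
    have h4 : v a * v a ^ 3 = v a * (4 * (v (a + 1) ^ 2 * v (a + 2))) :=
      calc v a * v a ^ 3 = (v a * v a) * (v a * v a) := by ring
        _ = (s * (w a * w (a + 1))) * (s * (w a * w (a + 1))) := by rw [E2']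
        _ = (s * s) * ((w a * w a) * (w (a + 1) * w (a + 1))) := by ring
        _ = (s * s) * ((s * (v a * v (a + 1))) * (s * (v (a + 1) * v (a + 1 + 1)))) := by
              rw [E1 a, E1 (a + 1)]
        _ = ((s * s) * (s * s)) * (v a * (v (a + 1) ^ 2 * v (a + 1 + 1))) := by ring
        _ = v a * (4 * (v (a + 1) ^ 2 * v (a + 2))) := by
              rw [hs2, show a + 1 + 1 = a + 2 from by ring]
              ring
    exact mul_left_cancel₀ (hall a) h4
  -- take the product over all indices
  have hPne : (∏ a : ZMod d, v a) ≠ 0 := Finset.prod_ne_zero_iff.mpr fun a _ => hall a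
  have hshift1 : (∏ a : ZMod d, v (a + 1)) = ∏ a : ZMod d, v a := by
    simpa using Equiv.prod_comp (Equiv.addRight (1 : ZMod d)) v
  have hshift2 : (∏ a : ZMod d, v (a + 2)) = ∏ a : ZMod d, v a := by
    simpa using Equiv.prod_comp (Equiv.addRight (2 : ZMod d)) v
  have hmain : (∏ a : ZMod d, v a) ^ 3 = (4 : ℂ) ^ d * (∏ a : ZMod d, v a) ^ 3 := by
    calc (∏ a : ZMod d, v a) ^ 3 = ∏ a : ZMod d, v a ^ 3 := (Finset.prod_pow _ _ _).symm
      _ = ∏ a : ZMod d, (4 * (v (a + 1) ^ 2 * v (a + 2))) :=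
          Finset.prod_congr rfl fun a _ => cube a
      _ = (∏ _a : ZMod d, (4 : ℂ)) *
            ((∏ a : ZMod d, v (a + 1)) ^ 2 * (∏ a : ZMod d, v (a + 2))) := by
          rw [Finset.prod_mul_distrib, Finset.prod_mul_distrib, Finset.prod_pow]
      _ = (4 : ℂ) ^ d * (∏ a : ZMod d, v a) ^ 3 := by
          rw [hshift1, hshift2, Finset.prod_const, Finset.card_univ, ZMod.card]
          ring
  have h41 : (4 : ℂ) ^ d = 1 := by
    have h3' : (∏ a : ZMod d, v a) ^ 3 ≠ 0 := pow_ne_zero _ hPne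
    exact mul_right_cancel₀ h3'
      (by rw [one_mul]; exact hmain.symm : (4 : ℂ) ^ d * (∏ a : ZMod d, v a) ^ 3
        = 1 * (∏ a : ZMod d, v a) ^ 3)
  have h4r : (4 : ℝ) ^ d = 1 := by exact_mod_cast h41
  have hlt : (1 : ℝ) < 4 ^ d := one_lt_pow₀ (by norm_num) (by omega)
  linarith
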